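/- For n ≥ 4, the automaton 𝒟'_n (a coloring of the digraph D_n) is synchronizing and the word (a b^{n-2})^{n-2} b a of length n² - 3n + 4 is a reset word for it. -/
import Mathlib

/-- The state reached from `q` by reading the word `w`. -/
def run {Q A : Type*} (δ : Q → A → Q) (q : Q) (w : List A) : Q := w.foldl δ q

/-- The automaton `𝒟'_n` on states `0,…,n-1` (paper's `1,…,n` shifted by one):
the letter `a` (= `true`) sends `i ↦ i+1` for `i < n-2`, `n-2 ↦ 0`, `n-1 ↦ 1`;
the letter `b` (= `false`) is the cyclic shift `i ↦ i+1 (mod n)`. -/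
def d1Aut (n : ℕ) (q : ZMod n) : Bool → ZMod n
  | true => if q.val = n - 2 then 0 else if q.val = n - 1 then 1 else q + 1
  | false => q + 1

lemma run_append {Q A : Type*} (δ : Q → A → Q) (q : Q) (l₁ l₂ : List A) :
    run δ q (l₁ ++ l₂) = run δ (run δ q l₁) l₂ := List.foldl_append ..

lemma run_replicate_false (n : ℕ) (q : ZMod n) (m : ℕ) :
    run (d1Aut n) q (List.replicate m false) = q + m := by
  induction m generalizing q with
  | zero => simp [run]
  | succ k ih =>
      rw [List.replicate_succ]
      show run (d1Aut n) (q + 1) (List.replicate k false) = _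
      rw [ih]; push_cast; ring

section main
variable (n : ℕ) (hn : 4 ≤ n)

/-- One block `a b^(n-2)`. -/
noncomputable def gfun (q : ZMod n) : ZMod n :=
  run (d1Aut n) q (true :: List.replicate (n - 2) false)

lemma gfun_eq (q : ZMod n) : gfun n q = d1Aut n q true + (n - 2 : ℕ) := by
  show run (d1Aut n) (d1Aut n q true) (List.replicate (n - 2) false) = _
  rw [run_replicate_false]

include hn

lemma cast_sub2 : ((n - 2 : ℕ) : ZMod n) = -2 := by
  have h2 : 2 ≤ n := by omega
  push_cast [Nat.cast_sub h2]
  simp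

lemma val_neg_one : (-1 : ZMod n).val = n - 1 := by
  haveI : NeZero n := ⟨by omega⟩
  have : ((n - 1 : ℕ) : ZMod n) = -1 := by
    push_cast [Nat.cast_sub (by omega : 1 ≤ n)]; simp
  rw [← this, ZMod.val_natCast_of_lt (by omega)]

lemma val_neg_two : (-2 : ZMod n).val = n - 2 := by
  haveI : NeZero n := ⟨by omega⟩
  have : ((n - 2 : ℕ) : ZMod n) = -2 := cast_sub2 n hn
  rw [← this, ZMod.val_natCast_of_lt (by omega)]

lemma gfun_neg_one : gfun n (-1) = -1 := by
  rw [gfun_eq, cast_sub2 n hn]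
  have h1 : (-1 : ZMod n).val = n - 1 := val_neg_one n hn
  show (if (-1 : ZMod n).val = n - 2 then (0:ZMod n) else if (-1 : ZMod n).val = n - 1 then 1 else -1 + 1) + -2 = -1
  rw [h1, if_neg (by omega), if_pos rfl]
  ring

lemma gfun_neg_two : gfun n (-2) = -2 := by
  rw [gfun_eq, cast_sub2 n hn]
  have h1 : (-2 : ZMod n).val = n - 2 := val_neg_two n hn
  show (if (-2 : ZMod n).val = n - 2 then (0:ZMod n) else if (-2 : ZMod n).val = n - 1 then 1 else -2 + 1) + -2 = -2
  rw [h1, if_pos rfl]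
  ring

lemma gfun_small (m : ℕ) (hm : m ≤ n - 3) : gfun n ((m : ZMod n)) = (m : ZMod n) - 1 := by
  haveI : NeZero n := ⟨by omega⟩
  have hv : ((m : ZMod n)).val = m := ZMod.val_natCast_of_lt (by omega)
  rw [gfun_eq, cast_sub2 n hn]
  show (if ((m : ZMod n)).val = n - 2 then (0:ZMod n) else if ((m : ZMod n)).val = n - 1 then 1 else (m : ZMod n) + 1) + -2 = _
  rw [hv, if_neg (by omega), if_neg (by omega)]
  ring

lemma gfun_iter_small (m : ℕ) (hm : m ≤ n - 3) :
    (gfun n)^[m + 1] ((m : ZMod n)) = -1 := by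
  haveI : NeZero n := ⟨by omega⟩
  induction m with
  | zero =>
      rw [Function.iterate_one, gfun_small n hn 0 (by omega)]
      simp
  | succ k ih =>
      rw [Function.iterate_succ_apply, gfun_small n hn (k+1) hm]
      have : ((k+1 : ℕ) : ZMod n) - 1 = ((k : ℕ) : ZMod n) := by push_cast; ring
      rw [this, ih (by omega)]

lemma gfun_iter_reaches (q : ZMod n) (hq : q.val ≤ n - 3) :
    (gfun n)^[n - 2] q = -1 := by
  haveI : NeZero n := ⟨by omega⟩
  obtain ⟨m, hm, rfl⟩ : ∃ m, m ≤ n - 3 ∧ q = ((m : ℕ) : ZMod n) :=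
    ⟨q.val, hq, ((ZMod.natCast_rightInverse.rightInverse q).symm)⟩
  have hsplit : n - 2 = (n - 3 - m) + (m + 1) := by omega
  rw [hsplit, Function.iterate_add_apply, gfun_iter_small n hn m hm,
    Function.iterate_fixed (gfun_neg_one n hn)]

omit hn in
lemma run_flatten (q : ZMod n) (k : ℕ) :
    run (d1Aut n) q (List.replicate k (true :: List.replicate (n - 2) false)).flatten
      = (gfun n)^[k] q := by
  induction k generalizing q with
  | zero => simp [run]
  | succ j ih =>
      rw [List.replicate_succ, List.flatten_cons, run_append, Function.iterate_succ_apply]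
      exact ih (gfun n q)

lemma run_tail_neg_one : run (d1Aut n) (-1 : ZMod n) [false, true] = 1 := by
  haveI : NeZero n := ⟨by omega⟩
  show d1Aut n (-1 + 1) true = 1
  have h0 : ((-1 : ZMod n) + 1) = 0 := by ring
  rw [h0]
  show (if (0 : ZMod n).val = n - 2 then (0:ZMod n) else if (0 : ZMod n).val = n - 1 then 1 else 0 + 1) = 1
  rw [ZMod.val_zero, if_neg (by omega), if_neg (by omega)]
  ring

lemma run_tail_neg_two : run (d1Aut n) (-2 : ZMod n) [false, true] = 1 := by
  haveI : NeZero n := ⟨by omega⟩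
  show d1Aut n (-2 + 1) true = 1
  have h0 : ((-2 : ZMod n) + 1) = -1 := by ring
  rw [h0]
  show (if (-1 : ZMod n).val = n - 2 then (0:ZMod n) else if (-1 : ZMod n).val = n - 1 then 1 else -1 + 1) = 1
  rw [val_neg_one n hn, if_neg (by omega), if_pos rfl]

end main

/-- For `n ≥ 4`, the automaton `𝒟'_n` is synchronizing and the word
`(a b^{n-2})^{n-2} b a` of length `n² - 3n + 4` is a reset word for it. -/
theorem stmt_12 (n : ℕ) (hn : 4 ≤ n) :
    let w : List Bool :=
      (List.replicate (n - 2) (true :: List.replicate (n - 2) false)).flatten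
      ++ [false, true]
    w.length = n ^ 2 - 3 * n + 4 ∧
    ∃ p : ZMod n, ∀ q, run (d1Aut n) q w = p := by
  haveI : NeZero n := ⟨by omega⟩
  intro w
  constructor
  · obtain ⟨m, rfl⟩ : ∃ m, n = m + 4 := ⟨n - 4, by omega⟩
    show ((List.replicate (m + 4 - 2) (true :: List.replicate (m + 4 - 2) false)).flatten
      ++ [false, true]).length = _
    simp only [List.length_append, List.length_cons, List.length_nil, List.length_flatten,
      List.map_replicate, List.length_replicate, List.sum_replicate, smul_eq_mul, List.map_cons]
    have h2 : m + 4 - 2 = m + 2 := by omega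
    rw [h2]
    have hsq : (m + 4) ^ 2 = m * m + 8 * m + 16 := by ring
    have hp : (m + 2) * (m + 2 + 1) = m * m + 5 * m + 6 := by ring
    rw [hsq, hp]
    omega
  · refine ⟨1, fun q => ?_⟩
    rw [show w = (List.replicate (n - 2) (true :: List.replicate (n - 2) false)).flatten
      ++ [false, true] from rfl, run_append, run_flatten n]
    have hqlt : q.val < n := ZMod.val_lt q
    rcases lt_trichotomy q.val (n - 2) with h | h | h
    · rw [gfun_iter_reaches n hn q (by omega)]
      exact run_tail_neg_one n hn
    · have hq : q = -2 := by
        have : q = ((q.val : ℕ) : ZMod n) := (ZMod.natCast_rightInverse.rightInverse q).symm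
        rw [this, h]; exact cast_sub2 n hn
      rw [hq, Function.iterate_fixed (gfun_neg_two n hn)]
      exact run_tail_neg_two n hn
    · have hq : q = -1 := by
        have hv : q.val = n - 1 := by omega
        have : q = ((q.val : ℕ) : ZMod n) := (ZMod.natCast_rightInverse.rightInverse q).symm
        rw [this, hv]
        push_cast [Nat.cast_sub (by omega : 1 ≤ n)]; simp
      rw [hq, Function.iterate_fixed (gfun_neg_one n hn)]
      exact run_tail_neg_one n hn
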